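/- arXiv:2112.04335 — 4 statements merged into one kernel-verified Lean document; each statement's English description precedes it below -/
import Mathlib

section
/- Let R(A,B,C) be a (2,2,2)-pole obtained from a snark G by deleting an edge uv (giving connectors A and B at u and v) and severing another edge e not incident with u or v (giving connector C). Then R admits no proper 3-edge-colouring φ with φ*(A) ≠ 0 and φ*(C) = 0. Consequently, if N(I,O) is a negator, T1(B1,C1) and T2(B2,C2) are proper (2,3)-poles, and the 9-pole M3 is formed by joining B1 to A, C to I, and O to B2, then M3 is uncolourable. -/
/-!
A colouring `φ` of `R` with `φ*(C) = 0` gives both halves of `e₁` the same colour, so it is a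
colouring `ψ` of `G - {u, v}`. Each edge end of `G` lies at exactly one vertex, so the vertex sums
of `ψ` add up to `0`; all of them vanish except those at `u` and `v`, which are `φ*(A)` and
`φ*(B)`. Hence `φ*(A) = φ*(B) = a ≠ 0`, and colouring `e₀` with `a` satisfies Kirchhoff's law
everywhere. The only edge that can still carry `0` is a second edge `f` joining `u` and `v`;
adding a colour `b ∉ {0, a}` on the 2-cycle `e₀ f` removes it. A nowhere-zero `Z₂ × Z₂`-flow on
a cubic graph is a 3-edge-colouring, which a snark does not have.

In `M₃`, the proper pole `T₂` makes the flow through `O` nonzero, so the negator forces zero flow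
through `I`, i.e. `φ*(C) = 0`, while `T₁` makes `φ*(A) ≠ 0`: the situation excluded for `R`.
-/

/-- The Klein four-group `Z₂ × Z₂`; Tait colourings use its three nonzero
elements as colours. -/
abbrev Klein : Type := ZMod 2 × ZMod 2

/-- A (cubic) multipole: a finite set of vertices and edges, where each edge has
two ends (`fst` and `snd`), each of which is either incident with a vertex
(`some v`) or free (`none`), the latter being a *semiedge*. -/
structure Multipole where
  V : Type
  E : Type
  [instVF : Fintype V]
  [instEF : Fintype E]
  [instVD : DecidableEq V]
  [instED : DecidableEq E]
  fst : E → Option V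
  snd : E → Option V

attribute [instance] Multipole.instVF Multipole.instEF Multipole.instVD Multipole.instED

namespace Multipole

variable (M : Multipole)

/-- The end of edge `e` on side `b`. -/
def endAt (e : M.E) (b : Bool) : Option M.V := if b then M.fst e else M.snd e

/-- The number of edge ends incident with `v`. -/
def degree (v : M.V) : ℕ :=
  (Finset.univ.filter fun p : M.E × Bool => M.endAt p.1 p.2 = some v).card

/-- Every vertex is incident with exactly three edge ends. -/
def IsCubic : Prop := ∀ v : M.V, M.degree v = 3

/-- No semiedges: every edge end is incident with a vertex (i.e. `M` is a graph). -/
def Closed : Prop := ∀ (e : M.E) (b : Bool), M.endAt e b ≠ none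

/-- Edge `e` joins vertices `x` and `y`. -/
def Joins (e : M.E) (x y : M.V) : Prop :=
  (M.fst e = some x ∧ M.snd e = some y) ∨ (M.fst e = some y ∧ M.snd e = some x)

def Adj (x y : M.V) : Prop := ∃ e : M.E, M.Joins e x y

def Conn : Prop := ∀ x y : M.V, Relation.ReflTransGen M.Adj x y

/-- A proper 3-edge-colouring (Tait colouring): every edge gets a nonzero
element of the Klein group and the edge ends meeting at any vertex get
pairwise distinct colours. -/
def Proper (φ : M.E → Klein) : Prop :=
  (∀ e, φ e ≠ 0) ∧
  ∀ (v : M.V) (p q : M.E × Bool),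
    M.endAt p.1 p.2 = some v → M.endAt q.1 q.2 = some v → p ≠ q → φ p.1 ≠ φ q.1

def Colourable : Prop := ∃ φ : M.E → Klein, M.Proper φ

/-- A colouring viewed as a nowhere-zero `Z₂ × Z₂`-flow: nonzero colours whose
sum at each vertex is `0`.  At 3-valent vertices this is equivalent to
properness; at a 2-valent vertex it forces the two incident edges to receive
equal colours, which is exactly the condition for the colouring to descend to
the cubic graph obtained by suppressing that vertex. -/
def ProperFlow (φ : M.E → Klein) : Prop :=
  (∀ e, φ e ≠ 0) ∧
  ∀ v : M.V, (∑ p : M.E × Bool, if M.endAt p.1 p.2 = some v then φ p.1 else 0) = 0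

def FlowColourable : Prop := ∃ φ : M.E → Klein, M.ProperFlow φ

/-- A snark: a connected cubic graph without a proper 3-edge-colouring. -/
def IsSnark : Prop := M.IsCubic ∧ M.Closed ∧ M.Conn ∧ ¬ M.Colourable

/-- The number of semiedges of `M`. -/
def semiendCount : ℕ :=
  (Finset.univ.filter fun p : M.E × Bool => M.endAt p.1 p.2 = none).card

/-- The number of semiedges of `M` whose edge is coloured `c`. -/
def semiendColourCount (φ : M.E → Klein) (c : Klein) : ℕ :=
  (Finset.univ.filter fun p : M.E × Bool => M.endAt p.1 p.2 = none ∧ φ p.1 = c).card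

/-- The sum of the colours on the semiedges of `M`. -/
def semiSum (φ : M.E → Klein) : Klein :=
  ∑ p : M.E × Bool, if M.endAt p.1 p.2 = none then φ p.1 else 0

/-- Delete a set of vertices, retaining dangling edges; edges with no end
outside `S` are discarded. -/
noncomputable def delVerts (S : Finset M.V) : Multipole := by
  classical
  exact
    { V := {x : M.V // x ∉ S}
      E := {e : M.E // ∃ (b : Bool) (x : M.V), M.endAt e b = some x ∧ x ∉ S}
      fst := fun e => match M.fst e.1 with
        | none => none
        | some x => if h : x ∈ S then none else some ⟨x, h⟩
      snd := fun e => match M.snd e.1 with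
        | none => none
        | some x => if h : x ∈ S then none else some ⟨x, h⟩ }

/-- The flow through the connector of `M.delVerts S` consisting of the
semiedges formerly incident with the deleted vertex `u`. -/
noncomputable def connFlow (S : Finset M.V) (φ : (M.delVerts S).E → Klein) (u : M.V) : Klein :=
  ∑ e : (M.delVerts S).E,
    ((if M.fst e.1 = some u then φ e else 0) + (if M.snd e.1 = some u then φ e else 0))

/-- Delete a single edge (keeping its end vertices). -/
def delEdge (e0 : M.E) : Multipole where
  V := M.V
  E := {e : M.E // e ≠ e0}
  fst := fun e => M.fst e.1
  snd := fun e => M.snd e.1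

/-- Delete a pair of edges (keeping their end vertices). -/
def delPair (e1 e2 : M.E) : Multipole where
  V := M.V
  E := {e : M.E // e ≠ e1 ∧ e ≠ e2}
  fst := fun e => M.fst e.1
  snd := fun e => M.snd e.1

/-- Sever the edge `e0`: replace it by two dangling edges. -/
def sever (e0 : M.E) : Multipole where
  V := M.V
  E := M.E ⊕ Unit
  fst := fun e => match e with
    | .inl f => M.fst f
    | .inr _ => M.snd e0
  snd := fun e => match e with
    | .inl f => if f = e0 then none else M.snd f
    | .inr _ => none

/-- The I-extension `G(e₁,e₂)`: subdivide `e₁` and `e₂` each with a new vertex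
and join the two new vertices by a new edge. -/
def extend (e1 e2 : M.E) : Multipole where
  V := M.V ⊕ Fin 2
  E := M.E ⊕ Fin 3
  fst := fun e => match e with
    | .inl f => (M.fst f).map Sum.inl
    | .inr i => if i = 0 then some (Sum.inr 0)
        else if i = 1 then some (Sum.inr 1) else some (Sum.inr 0)
  snd := fun e => match e with
    | .inl f => if f = e1 then some (Sum.inr 0)
        else if f = e2 then some (Sum.inr 1) else (M.snd f).map Sum.inl
    | .inr i => if i = 0 then (M.snd e1).map Sum.inl
        else if i = 1 then (M.snd e2).map Sum.inl else some (Sum.inr 1)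

/-- A bicritical snark: a snark in which the removal of any two distinct
vertices leaves a 3-edge-colourable multipole. -/
def Bicritical : Prop :=
  M.IsSnark ∧ ∀ x y : M.V, x ≠ y → (M.delVerts {x, y}).Colourable

end Multipole

/-- The colouring set of a 6-pole, as a predicate on the colours of its six
semiedges. -/
abbrev Pred6 : Type := Klein → Klein → Klein → Klein → Klein → Klein → Prop

/-- The colouring set of a 5-pole, as a predicate on the colours of its five
semiedges. -/
abbrev Pred5 : Type := Klein → Klein → Klein → Klein → Klein → Prop

/-- The defining property of colourings of a negator: see the paper. -/
def NegC (i1 i2 o1 o2 r : Klein) : Prop :=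
  i1 ≠ 0 ∧ i2 ≠ 0 ∧ o1 ≠ 0 ∧ o2 ≠ 0 ∧ r ≠ 0 ∧
    ((i1 + i2 = 0 ∧ o1 + o2 ≠ 0 ∧ o1 + o2 = r) ∨
     (o1 + o2 = 0 ∧ i1 + i2 ≠ 0 ∧ i1 + i2 = r))

/-- `N` is (the colouring set of) a negator `N(I,O,r)`. -/
def IsNegator (N : Pred5) : Prop :=
  ∀ i1 i2 o1 o2 r, N i1 i2 o1 o2 r → NegC i1 i2 o1 o2 r

/-- The defining property of colourings of a proper `(2,3)`-pole `T(B,C)`. -/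
def P23C (b1 b2 c1 c2 c3 : Klein) : Prop :=
  b1 ≠ 0 ∧ b2 ≠ 0 ∧ c1 ≠ 0 ∧ c2 ≠ 0 ∧ c3 ≠ 0 ∧
    b1 + b2 = c1 + c2 + c3 ∧ b1 + b2 ≠ 0

/-- `T` is (the colouring set of) a proper `(2,3)`-pole. -/
def IsProper23 (T : Pred5) : Prop :=
  ∀ b1 b2 c1 c2 c3, T b1 b2 c1 c2 c3 → P23C b1 b2 c1 c2 c3

namespace Klein

set_option synthInstance.maxSize 1000 in
theorem pairwise_ne_iff_add_add_eq_zero :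
    ∀ x y z : Klein, x ≠ 0 → y ≠ 0 → z ≠ 0 → (x ≠ y ∧ x ≠ z ∧ y ≠ z ↔ x + y + z = 0) := by
  decide

theorem exists_ne_zero_add_ne_zero : ∀ x : Klein, ∃ b : Klein, b ≠ 0 ∧ x + b ≠ 0 := by
  decide

end Klein

namespace Multipole

variable {M : Multipole}

variable (M) in
def ends (w : M.V) : Finset (M.E × Bool) :=
  Finset.univ.filter fun p => M.endAt p.1 p.2 = some w

variable (M) in
def vertexSum (χ : M.E → Klein) (w : M.V) : Klein :=
  ∑ p : M.E × Bool, if M.endAt p.1 p.2 = some w then χ p.1 else 0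

variable (M) in
def ProperAt (χ : M.E → Klein) (w : M.V) : Prop :=
  (∀ p ∈ M.ends w, χ p.1 ≠ 0) ∧ ∀ p ∈ M.ends w, ∀ q ∈ M.ends w, p ≠ q → χ p.1 ≠ χ q.1

@[simp]
theorem mem_ends {w : M.V} {p : M.E × Bool} : p ∈ M.ends w ↔ M.endAt p.1 p.2 = some w := by
  simp [ends]

theorem card_ends (w : M.V) : (M.ends w).card = M.degree w := rfl

theorem vertexSum_eq_sum_ends (χ : M.E → Klein) (w : M.V) :
    M.vertexSum χ w = ∑ p ∈ M.ends w, χ p.1 :=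
  (Finset.sum_filter _ _).symm

theorem vertexSum_add (χ χ' : M.E → Klein) (w : M.V) :
    M.vertexSum (χ + χ') w = M.vertexSum χ w + M.vertexSum χ' w := by
  simp only [vertexSum_eq_sum_ends, Pi.add_apply, Finset.sum_add_distrib]

theorem vertexSum_single (e : M.E) (c : Klein) (w : M.V) :
    M.vertexSum (Pi.single e c) w =
      (if M.fst e = some w then c else 0) + (if M.snd e = some w then c else 0) := by
  rw [vertexSum, Fintype.sum_prod_type, Finset.sum_eq_single e]
  · simp [endAt]
  · intro f _ hf
    simp [hf]
  · simp

theorem Joins.symm {e : M.E} {x y : M.V} (h : M.Joins e x y) : M.Joins e y x :=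
  Or.symm h

theorem Joins.exists_endAt_left {e : M.E} {x y : M.V} (h : M.Joins e x y) :
    ∃ b, M.endAt e b = some x := by
  rcases h with ⟨hx, -⟩ | ⟨-, hx⟩
  exacts [⟨true, hx⟩, ⟨false, hx⟩]

theorem Joins.eq_or_eq_of_endAt_eq_some {e : M.E} {x y w : M.V} (h : M.Joins e x y) {b : Bool}
    (hw : M.endAt e b = some w) : w = x ∨ w = y := by
  rcases h with ⟨hx, hy⟩ | ⟨hy, hx⟩ <;> cases b <;> simp only [endAt] at hw <;>
    simp_all

theorem Joins.vertexSum_single {e : M.E} {x y : M.V} (h : M.Joins e x y) (hxy : x ≠ y)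
    (c : Klein) (w : M.V) :
    M.vertexSum (Pi.single e c) w = if w = x ∨ w = y then c else 0 := by
  rw [Multipole.vertexSum_single]
  rcases h with ⟨hx, hy⟩ | ⟨hy, hx⟩ <;> rw [hx, hy] <;> split_ifs <;> grind

theorem ends_eq_of_mem {w : M.V} (hdeg : M.degree w = 3) {p q r : M.E × Bool}
    (hp : p ∈ M.ends w) (hq : q ∈ M.ends w) (hr : r ∈ M.ends w)
    (hpq : p ≠ q) (hpr : p ≠ r) (hqr : q ≠ r) : M.ends w = {p, q, r} := by
  refine (Finset.eq_of_subset_of_card_le ?_ ?_).symm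
  · simp [Finset.insert_subset_iff, hp, hq, hr]
  · rw [card_ends, hdeg, Finset.card_eq_three.mpr ⟨p, q, r, hpq, hpr, hqr, rfl⟩]

theorem vertexSum_eq_of_mem_ends {w : M.V} (hdeg : M.degree w = 3) (χ : M.E → Klein)
    {p q r : M.E × Bool} (hp : p ∈ M.ends w) (hq : q ∈ M.ends w) (hr : r ∈ M.ends w)
    (hpq : p ≠ q) (hpr : p ≠ r) (hqr : q ≠ r) :
    M.vertexSum χ w = χ p.1 + χ q.1 + χ r.1 := by
  rw [vertexSum_eq_sum_ends, ends_eq_of_mem hdeg hp hq hr hpq hpr hqr,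
    Finset.sum_insert (by simp [hpq, hpr]), Finset.sum_pair hqr, add_assoc]

theorem properAt_iff_vertexSum_eq_zero {w : M.V} (hdeg : M.degree w = 3) {χ : M.E → Klein}
    (h0 : ∀ p ∈ M.ends w, χ p.1 ≠ 0) : M.ProperAt χ w ↔ M.vertexSum χ w = 0 := by
  obtain ⟨p, q, r, hpq, hpr, hqr, hends⟩ := Finset.card_eq_three.mp hdeg
  replace hends : M.ends w = {p, q, r} := hends
  have hp : p ∈ M.ends w := by rw [hends]; simp
  have hq : q ∈ M.ends w := by rw [hends]; simp
  have hr : r ∈ M.ends w := by rw [hends]; simp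
  rw [vertexSum_eq_of_mem_ends hdeg χ hp hq hr hpq hpr hqr,
    ← Klein.pairwise_ne_iff_add_add_eq_zero _ _ _ (h0 p hp) (h0 q hq) (h0 r hr)]
  refine ⟨fun h => ⟨h.2 p hp q hq hpq, h.2 p hp r hr hpr, h.2 q hq r hr hqr⟩, fun h => ⟨h0, ?_⟩⟩
  obtain ⟨h1, h2, h3⟩ := h
  rw [hends]
  simp only [Finset.mem_insert, Finset.mem_singleton]
  rintro a (rfl | rfl | rfl) b (rfl | rfl | rfl) hab <;> first | exact absurd rfl hab | grind

theorem IsCubic.proper_of_properFlow (hcub : M.IsCubic) {χ : M.E → Klein}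
    (h : M.ProperFlow χ) : M.Proper χ := by
  refine ⟨h.1, fun w p q hp hq hpq => ?_⟩
  have hw := (properAt_iff_vertexSum_eq_zero (hcub w) fun p _ => h.1 p.1).mpr (h.2 w)
  exact hw.2 p (mem_ends.mpr hp) q (mem_ends.mpr hq) hpq

theorem IsCubic.colourable_of_flowColourable (hcub : M.IsCubic) (h : M.FlowColourable) :
    M.Colourable :=
  h.imp fun _ => hcub.proper_of_properFlow

/-- Each edge end lies at exactly one vertex, so every value of `χ` is counted twice. -/
theorem sum_vertexSum_eq_zero (hclosed : M.Closed) (χ : M.E → Klein) :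
    ∑ w, M.vertexSum χ w = 0 := by
  have hend : ∀ p : M.E × Bool, ∑ w, (if M.endAt p.1 p.2 = some w then χ p.1 else 0) = χ p.1 := by
    intro p
    obtain ⟨x, hx⟩ := Option.ne_none_iff_exists'.mp (hclosed p.1 p.2)
    simp [hx]
  simp only [vertexSum]
  rw [Finset.sum_comm, Fintype.sum_congr _ _ hend, Fintype.sum_prod_type]
  exact Finset.sum_eq_zero fun e _ => by rw [Fintype.sum_bool]; exact CharTwo.add_self_eq_zero _

theorem IsCubic.flowColourable_of_eq_zero_joins (hcub : M.IsCubic) {u v : M.V} (huv : u ≠ v)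
    {e₀ : M.E} (he₀ : M.Joins e₀ u v) {χ : M.E → Klein} (hflow : ∀ w, M.vertexSum χ w = 0)
    (hχe₀ : χ e₀ ≠ 0) (hzero : ∀ f, χ f = 0 → M.Joins f u v) : M.FlowColourable := by
  by_cases hz : ∃ f, χ f = 0
  swap
  · exact ⟨χ, fun f hf => hz ⟨f, hf⟩, hflow⟩
  obtain ⟨f, hf⟩ := hz
  have hfe₀ : f ≠ e₀ := by rintro rfl; exact hχe₀ hf
  obtain ⟨b, hb0, hb⟩ := Klein.exists_ne_zero_add_ne_zero (χ e₀)
  -- Adding `b` along the 2-cycle formed by `e₀` and `f` keeps Kirchhoff's law at `u` and `v`.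
  refine ⟨χ + Pi.single e₀ b + Pi.single f b, fun g => ?_, fun w => ?_⟩
  · by_cases hg₀ : g = e₀
    · subst hg₀
      simpa [hfe₀.symm] using hb
    by_cases hgf : g = f
    · subst hgf
      simpa [hg₀, hf] using hb0
    simp only [Pi.add_apply, Pi.single_apply, hg₀, hgf, if_false, add_zero]
    intro hg
    -- otherwise `e₀`, `f` and `g` would be the three edges at `u`
    obtain ⟨b0, h0⟩ := he₀.exists_endAt_left
    obtain ⟨b1, h1⟩ := (hzero f hf).exists_endAt_left
    obtain ⟨b2, h2⟩ := (hzero g hg).exists_endAt_left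
    have hu := vertexSum_eq_of_mem_ends (hcub u) χ (p := (e₀, b0)) (q := (f, b1)) (r := (g, b2))
      (mem_ends.2 h0) (mem_ends.2 h1) (mem_ends.2 h2) (by simp [Ne.symm hfe₀])
      (by simp [Ne.symm hg₀]) (by simp [Ne.symm hgf])
    rw [hflow, hf, hg, add_zero, add_zero] at hu
    exact hχe₀ hu.symm
  · change M.vertexSum _ w = 0
    rw [vertexSum_add, vertexSum_add, hflow, he₀.vertexSum_single huv,
      (hzero f hf).vertexSum_single huv, zero_add, CharTwo.add_self_eq_zero]

theorem IsCubic.vertexSum_eq_ite_of_properAt (hcub : M.IsCubic) (hclosed : M.Closed)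
    {u v : M.V} (huv : u ≠ v) {ψ : M.E → Klein} (hψ : ∀ w, w ≠ u → w ≠ v → M.ProperAt ψ w)
    (w : M.V) : M.vertexSum ψ w = if w = u ∨ w = v then M.vertexSum ψ u else 0 := by
  have hout : ∀ w, w ≠ u → w ≠ v → M.vertexSum ψ w = 0 := fun w hwu hwv =>
    (properAt_iff_vertexSum_eq_zero (hcub w) (hψ w hwu hwv).1).mp (hψ w hwu hwv)
  have hv : M.vertexSum ψ v = M.vertexSum ψ u := by
    have hsum := sum_vertexSum_eq_zero hclosed ψ
    rw [Fintype.sum_eq_add u v huv fun w hw => hout w hw.1 hw.2] at hsum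
    exact (CharTwo.add_eq_zero.mp hsum).symm
  by_cases hwu : w = u
  · simp [hwu]
  by_cases hwv : w = v
  · simp [hwv, hv]
  simp [hwu, hwv, hout w hwu hwv]

theorem IsCubic.colourable_of_properAt_of_vertexSum_ne_zero (hcub : M.IsCubic)
    (hclosed : M.Closed) {u v : M.V} (huv : u ≠ v) {e₀ : M.E} (he₀ : M.Joins e₀ u v)
    {ψ : M.E → Klein} (hψ : ∀ w, w ≠ u → w ≠ v → M.ProperAt ψ w) (hψe₀ : ψ e₀ = 0)
    (hu : M.vertexSum ψ u ≠ 0) : M.Colourable := by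
  set a := M.vertexSum ψ u
  set χ := ψ + Pi.single e₀ a
  have hflow : ∀ w, M.vertexSum χ w = 0 := fun w => by
    rw [vertexSum_add, he₀.vertexSum_single huv,
      hcub.vertexSum_eq_ite_of_properAt hclosed huv hψ]
    exact CharTwo.add_self_eq_zero _
  have hχe₀ : χ e₀ = a := by simp [χ, hψe₀]
  refine hcub.colourable_of_flowColourable
    (hcub.flowColourable_of_eq_zero_joins huv he₀ hflow (hχe₀ ▸ hu) fun f hf => ?_)
  have hfe₀ : f ≠ e₀ := by rintro rfl; exact hu (hχe₀ ▸ hf)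
  have hψf : ψ f = 0 := by simpa [χ, hfe₀] using hf
  have hend : ∀ b, M.endAt f b = some u ∨ M.endAt f b = some v := by
    intro b
    obtain ⟨x, hx⟩ := Option.ne_none_iff_exists'.mp (hclosed f b)
    by_contra h
    rw [not_or] at h
    exact (hψ x (by rintro rfl; exact h.1 hx) (by rintro rfl; exact h.2 hx)).1 (f, b)
      (mem_ends.2 hx) hψf
  -- a loop `f` at an end `w` of `e₀` would make the vertex sum of `χ` at `w` equal to `a`
  have hloop : ∀ w, (∃ b, M.endAt e₀ b = some w) → M.fst f = some w → M.snd f = some w →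
      False := by
    rintro w ⟨b0, h0⟩ h1 h2
    have hw := vertexSum_eq_of_mem_ends (hcub w) χ (mem_ends.2 h0) (p := (e₀, b0))
      (q := (f, true)) (r := (f, false)) (mem_ends.2 h1) (mem_ends.2 h2)
      (by simp [Ne.symm hfe₀]) (by simp [Ne.symm hfe₀]) (by simp)
    rw [hflow, hχe₀, hf, add_zero, add_zero] at hw
    exact hu hw.symm
  rcases hend true with h1 | h1 <;> rcases hend false with h2 | h2
  · exact (hloop u he₀.exists_endAt_left h1 h2).elim
  · exact Or.inl ⟨h1, h2⟩
  · exact Or.inr ⟨h1, h2⟩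
  · exact (hloop v he₀.symm.exists_endAt_left h1 h2).elim

section DelVerts

variable {S : Finset M.V}

variable (S) in
noncomputable def extendColouring (φ : (M.delVerts S).E → Klein) : M.E → Klein :=
  Function.extend (fun e : (M.delVerts S).E => e.1) φ 0

theorem extendColouring_val (φ : (M.delVerts S).E → Klein) (e : (M.delVerts S).E) :
    M.extendColouring S φ e.1 = φ e :=
  Subtype.val_injective.extend_apply φ 0 e

theorem extendColouring_eq_zero (φ : (M.delVerts S).E → Klein) {m : M.E}
    (hm : ∀ b x, M.endAt m b = some x → x ∈ S) : M.extendColouring S φ m = 0 :=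
  Function.extend_apply' _ _ _ fun ⟨e, he⟩ => by
    obtain ⟨b, x, hx, hxS⟩ := e.2
    exact hxS (hm b x (he ▸ hx))

theorem sum_delVerts_eq_sum_extendColouring (φ : (M.delVerts S).E → Klein)
    (F : M.E → Klein → Klein) (hF : ∀ m, F m 0 = 0) :
    ∑ e : (M.delVerts S).E, F e.1 (φ e) = ∑ m, F m (M.extendColouring S φ m) := by
  classical
  let kept : M.E → Prop := fun m => ∃ (b : Bool) (x : M.V), M.endAt m b = some x ∧ x ∉ S
  have hkept := Finset.sum_subtype (p := kept) (F := (M.delVerts S).instEF)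
    (Finset.univ.filter kept) (by simp) fun m => F m (M.extendColouring S φ m)
  rw [← Finset.sum_filter_add_sum_filter_not Finset.univ kept, hkept,
    Finset.sum_eq_zero (s := Finset.univ.filter fun m => ¬ kept m), add_zero]
  · exact Fintype.sum_congr _ _ fun e => by rw [extendColouring_val]
  · intro m hm
    rw [extendColouring_eq_zero φ, hF]
    intro b x hx
    by_contra hxS
    exact (Finset.mem_filter.mp hm).2 ⟨b, x, hx, hxS⟩

theorem connFlow_eq_vertexSum (φ : (M.delVerts S).E → Klein) (u : M.V) :
    M.connFlow S φ u = M.vertexSum (M.extendColouring S φ) u := by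
  rw [connFlow, sum_delVerts_eq_sum_extendColouring φ
    (fun m x => (if M.fst m = some u then x else 0) + (if M.snd m = some u then x else 0))
    (by simp), vertexSum, Fintype.sum_prod_type]
  simp [endAt]

theorem sum_ite_val_eq_or_eq (φ : (M.delVerts S).E → Klein) {m₁ m₂ : M.E} (h : m₁ ≠ m₂) :
    ∑ e : (M.delVerts S).E, (if e.1 = m₁ ∨ e.1 = m₂ then φ e else 0) =
      M.extendColouring S φ m₁ + M.extendColouring S φ m₂ := by
  rw [sum_delVerts_eq_sum_extendColouring φ (fun m x => if m = m₁ ∨ m = m₂ then x else 0)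
    (by simp), Fintype.sum_eq_add m₁ m₂ h (by simp +contextual)]
  simp [h.symm]

theorem delVerts_endAt_eq_some {e : (M.delVerts S).E} {b : Bool} {w : M.V} (hw : w ∉ S)
    (h : M.endAt e.1 b = some w) : (M.delVerts S).endAt e b = some ⟨w, hw⟩ := by
  cases b <;> simp_all [endAt, delVerts]

theorem Proper.properAt_extendColouring {φ : (M.delVerts S).E → Klein}
    (hφ : (M.delVerts S).Proper φ) {w : M.V} (hw : w ∉ S) :
    M.ProperAt (M.extendColouring S φ) w := by
  let lift : ∀ p ∈ M.ends w, (M.delVerts S).E := fun p hp => ⟨p.1, p.2, w, mem_ends.1 hp, hw⟩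
  have hlift : ∀ p hp, M.extendColouring S φ p.1 = φ (lift p hp) := fun p hp =>
    extendColouring_val φ (lift p hp)
  refine ⟨fun p hp => hlift p hp ▸ hφ.1 _, fun p hp q hq hpq => ?_⟩
  rw [hlift p hp, hlift q hq]
  refine hφ.2 ⟨w, hw⟩ (lift p hp, p.2) (lift q hq, q.2) (delVerts_endAt_eq_some hw
    (mem_ends.1 hp)) (delVerts_endAt_eq_some hw (mem_ends.1 hq)) fun h => hpq ?_
  exact Prod.ext (congrArg (fun r : (M.delVerts S).E × Bool => r.1.1) h)
    (congrArg (fun r : (M.delVerts S).E × Bool => r.2) h)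

end DelVerts

section Sever

variable {e₁ : M.E}

variable (e₁) in
/-- The `snd` end of `e₁` becomes the `fst` end of the new edge `Sum.inr ()`. -/
def severEnd (p : M.E × Bool) : (M.sever e₁).E × Bool :=
  if p = (e₁, false) then (Sum.inr (), true) else (Sum.inl p.1, p.2)

theorem sever_endAt_inl (f : M.E) (b : Bool) :
    (M.sever e₁).endAt (Sum.inl f) b = if (f, b) = (e₁, false) then none else M.endAt f b := by
  cases b <;> by_cases hf : f = e₁ <;> simp [sever, endAt, hf]

theorem endAt_severEnd (p : M.E × Bool) :
    (M.sever e₁).endAt (severEnd e₁ p).1 (severEnd e₁ p).2 = M.endAt p.1 p.2 := by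
  unfold severEnd
  split_ifs with hp
  · rw [hp]
    rfl
  · rw [sever_endAt_inl, if_neg hp]

theorem severEnd_injective : Function.Injective (severEnd (M := M) e₁) := by
  intro p q h
  unfold severEnd at h
  split_ifs at h with hp hq hq
  · exact hp.trans hq.symm
  · exact absurd (congrArg Prod.fst h) Sum.inr_ne_inl
  · exact absurd (congrArg Prod.fst h) Sum.inl_ne_inr
  · exact Prod.ext (Sum.inl_injective (congrArg Prod.fst h))
      (congrArg (fun r : (M.sever e₁).E × Bool => r.2) h)

theorem exists_severEnd_eq {q : (M.sever e₁).E × Bool} {w : M.V}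
    (hq : (M.sever e₁).endAt q.1 q.2 = some w) : ∃ p, severEnd e₁ p = q := by
  obtain ⟨f | ⟨⟩, b⟩ := q
  · refine ⟨(f, b), if_neg fun hf => ?_⟩
    rw [sever_endAt_inl, if_pos hf] at hq
    cases hq
  · cases b
    · cases hq
    · exact ⟨(e₁, false), if_pos rfl⟩

theorem apply_severEnd_fst {χ : (M.sever e₁).E → Klein} (hχ : χ (Sum.inl e₁) = χ (Sum.inr ()))
    (p : M.E × Bool) : χ (severEnd e₁ p).1 = χ (Sum.inl p.1) := by
  unfold severEnd
  split_ifs with hp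
  · rw [hp, hχ]
  · rfl

theorem ends_sever (w : M.V) :
    (M.sever e₁).ends w = (M.ends w).map ⟨severEnd e₁, severEnd_injective⟩ := by
  ext q
  rw [Finset.mem_map]
  constructor
  · intro hq
    have hq := (mem_ends (M := M.sever e₁)).1 hq
    obtain ⟨p, rfl⟩ := exists_severEnd_eq hq
    exact ⟨p, mem_ends.2 ((endAt_severEnd p).symm.trans hq), rfl⟩
  · rintro ⟨p, hp, rfl⟩
    exact (mem_ends (M := M.sever e₁)).2 ((endAt_severEnd p).trans (mem_ends.1 hp))

theorem vertexSum_sever {χ : (M.sever e₁).E → Klein} (hχ : χ (Sum.inl e₁) = χ (Sum.inr ()))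
    (w : M.V) : (M.sever e₁).vertexSum χ w = M.vertexSum (fun f => χ (Sum.inl f)) w := by
  refine (vertexSum_eq_sum_ends (M := M.sever e₁) χ w).trans ?_
  rw [vertexSum_eq_sum_ends, ends_sever, Finset.sum_map]
  exact Finset.sum_congr rfl fun p _ => apply_severEnd_fst hχ p

theorem ProperAt.of_sever {χ : (M.sever e₁).E → Klein} (hχ : χ (Sum.inl e₁) = χ (Sum.inr ()))
    {w : M.V} (h : (M.sever e₁).ProperAt χ w) : M.ProperAt (fun f => χ (Sum.inl f)) w := by
  have hmem : ∀ p ∈ M.ends w, severEnd e₁ p ∈ (M.sever e₁).ends w := fun p hp => by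
    rw [ends_sever]
    exact Finset.mem_map_of_mem _ hp
  refine ⟨fun p hp => ?_, fun p hp q hq hpq => ?_⟩
  · have hp' := h.1 _ (hmem p hp)
    rwa [apply_severEnd_fst hχ] at hp'
  · have hpq' := h.2 _ (hmem p hp) _ (hmem q hq) (severEnd_injective.ne hpq)
    rwa [apply_severEnd_fst hχ, apply_severEnd_fst hχ] at hpq'

end Sever

theorem IsCubic.colourable_of_proper_sever_delVerts {G : Multipole} (hcub : G.IsCubic)
    (hclosed : G.Closed) {u v : G.V} (huv : u ≠ v) {e₀ : G.E} (he₀ : G.Joins e₀ u v) {e₁ : G.E}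
    {φ : ((G.sever e₁).delVerts {u, v}).E → Klein}
    (hφ : ((G.sever e₁).delVerts {u, v}).Proper φ) (hA : (G.sever e₁).connFlow {u, v} φ u ≠ 0)
    (hC : (G.sever e₁).extendColouring {u, v} φ (Sum.inl e₁) =
      (G.sever e₁).extendColouring {u, v} φ (Sum.inr ())) :
    G.Colourable := by
  refine hcub.colourable_of_properAt_of_vertexSum_ne_zero hclosed huv he₀
    (ψ := fun f => (G.sever e₁).extendColouring {u, v} φ (Sum.inl f)) (fun w hwu hwv => ?_) ?_ ?_
  · refine ProperAt.of_sever hC (hφ.properAt_extendColouring fun hw => ?_)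
    exact (Finset.mem_insert.1 hw).elim hwu fun hw => hwv (Finset.mem_singleton.1 hw)
  · refine extendColouring_eq_zero φ fun b x hx => ?_
    rw [sever_endAt_inl] at hx
    split_ifs at hx
    rcases he₀.eq_or_eq_of_endAt_eq_some hx with rfl | rfl
    exacts [Finset.mem_insert_self _ _, Finset.mem_insert_of_mem (Finset.mem_singleton_self _)]
  · rw [← vertexSum_sever hC]
    exact fun h => hA ((connFlow_eq_vertexSum φ u).trans h)

end Multipole

theorem NegC.add_eq_zero_of_add_ne_zero {i₁ i₂ o₁ o₂ r : Klein} (h : NegC i₁ i₂ o₁ o₂ r)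
    (ho : o₁ + o₂ ≠ 0) : i₁ + i₂ = 0 := by
  obtain ⟨-, -, -, -, -, ⟨hi, -⟩ | ⟨ho', -⟩⟩ := h
  exacts [hi, absurd ho' ho]

theorem P23C.add_ne_zero {b₁ b₂ c₁ c₂ c₃ : Klein} (h : P23C b₁ b₂ c₁ c₂ c₃) : b₁ + b₂ ≠ 0 :=
  h.2.2.2.2.2.2

theorem class_34C_general (G : Multipole) (hG : G.IsSnark) (u v : G.V) (huv : u ≠ v)
    (e0 : G.E) (he0 : G.Joins e0 u v) (e1 : G.E) :
    (∀ φ : ((G.sever e1).delVerts {u, v}).E → Klein,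
       ((G.sever e1).delVerts {u, v}).Proper φ →
       ¬ ((G.sever e1).connFlow {u, v} φ u ≠ 0 ∧
          (∑ e : ((G.sever e1).delVerts {u, v}).E,
              @ite _ (e.1 = Sum.inl e1 ∨ e.1 = Sum.inr ())
                (@instDecidableOr _ _ ((G.sever e1).instED _ _) ((G.sever e1).instED _ _))
                (φ e) 0) = 0)) ∧
    (∀ R6 : Pred6,
       (∀ a1 a2 b1 b2 c1 c2, R6 a1 a2 b1 b2 c1 c2 → ¬ (a1 + a2 ≠ 0 ∧ c1 + c2 = 0)) →
       ∀ N T1 T2 : Pred5, IsNegator N → IsProper23 T1 → IsProper23 T2 →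
       ¬ ∃ a1 a2 b1 b2 c1 c2 c11 c12 c13 o1 o2 r c21 c22 c23 : Klein,
           T1 a1 a2 c11 c12 c13 ∧ R6 a1 a2 b1 b2 c1 c2 ∧
           N c1 c2 o1 o2 r ∧ T2 o1 o2 c21 c22 c23) := by
  obtain ⟨hcub, hclosed, -, hncol⟩ := hG
  refine ⟨fun φ hφ ⟨hA, hC⟩ => hncol ?_, ?_⟩
  · rw [Multipole.sum_ite_val_eq_or_eq φ Sum.inl_ne_inr, CharTwo.add_eq_zero] at hC
    exact hcub.colourable_of_proper_sever_delVerts hclosed huv he0 hφ hA hC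
  · rintro R6 hR6 N T1 T2 hN hT1 hT2 ⟨a1, a2, b1, b2, c1, c2, c11, c12, c13, o1, o2, r, c21, c22,
      c23, hT1a, hR6a, hNa, hT2a⟩
    exact hR6 _ _ _ _ _ _ hR6a ⟨(hT1 _ _ _ _ _ hT1a).add_ne_zero,
      (hN _ _ _ _ _ hNa).add_eq_zero_of_add_ne_zero (hT2 _ _ _ _ _ hT2a).add_ne_zero⟩

/-- **Class 34-C.**  Let `R(A,B,C)` be the `(2,2,2)`-pole obtained from a snark
`G` by deleting the two endvertices `u, v` of an edge `e₀` (connectors `A`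
at `u` and `B` at `v`) and severing an edge `e₁` not incident with `u` or `v`
(connector `C`, the two halves of `e₁`).  Then:
(1) `R` admits no proper 3-edge-colouring `φ` with `φ*(A) ≠ 0` and
`φ*(C) = 0`; and
(2) consequently, for any abstract `(2,2,2)`-pole `R₆(A,B,C)` whose colouring
set has this property, any negator `N(I,O,r)` and proper `(2,3)`-poles
`T₁(B₁,C₁)`, `T₂(B₂,C₂)`, the 9-pole `M₃` formed by joining `B₁` to `A`, `C`
to `I` and `O` to `B₂` is uncolourable. -/
theorem class_34C (G : Multipole) (hG : G.IsSnark) (u v : G.V) (huv : u ≠ v)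
    (e0 : G.E) (he0 : G.Joins e0 u v) (e1 : G.E) (h01 : e1 ≠ e0)
    (hni : ∀ b : Bool, G.endAt e1 b ≠ some u ∧ G.endAt e1 b ≠ some v) :
    (∀ φ : ((G.sever e1).delVerts {u, v}).E → Klein,
       ((G.sever e1).delVerts {u, v}).Proper φ →
       ¬ ((G.sever e1).connFlow {u, v} φ u ≠ 0 ∧
          (∑ e : ((G.sever e1).delVerts {u, v}).E,
              @ite _ (e.1 = Sum.inl e1 ∨ e.1 = Sum.inr ())
                (@instDecidableOr _ _ ((G.sever e1).instED _ _) ((G.sever e1).instED _ _))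
                (φ e) 0) = 0)) ∧
    (∀ R6 : Pred6,
       (∀ a1 a2 b1 b2 c1 c2, R6 a1 a2 b1 b2 c1 c2 → ¬ (a1 + a2 ≠ 0 ∧ c1 + c2 = 0)) →
       ∀ N T1 T2 : Pred5, IsNegator N → IsProper23 T1 → IsProper23 T2 →
       ¬ ∃ a1 a2 b1 b2 c1 c2 c11 c12 c13 o1 o2 r c21 c22 c23 : Klein,
           T1 a1 a2 c11 c12 c13 ∧ R6 a1 a2 b1 b2 c1 c2 ∧
           N c1 c2 o1 o2 r ∧ T2 o1 o2 c21 c22 c23) :=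
  class_34C_general G hG u v huv e0 he0 e1
end

section
/- Let N1, N2, N3, N4 be negators Ni(Ii,Oi,ri) arranged cyclically with Oi joined to I_{i+1} (indices mod 4, with one edge of each junction rerouted through a central vertex u as in the Class 34-D configuration), and the residual semiedges connected so that r1, r3 meet at u and r2, r4 are joined to each other as in Figure 34-D. Then the resulting cubic graph G4 admits no proper 3-edge-colouring, i.e., G4 is a snark. -/
/-- `N` is a perfect negator: its colouring set is the full set `NegC`. -/
def IsPerfectNegator (N : Pred5) : Prop :=
  ∀ i1 i2 o1 o2 r, N i1 i2 o1 o2 r ↔ NegC i1 i2 o1 o2 r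

/-- `T` is a perfect proper `(2,3)`-pole: its colouring set is all of `P23C`. -/
def IsPerfect23 (T : Pred5) : Prop :=
  ∀ b1 b2 c1 c2 c3, T b1 b2 c1 c2 c3 ↔ P23C b1 b2 c1 c2 c3

/-- The colouring set of the path `P₂` of length two with dangling edges
retained, the semiedges listed as (two at one endvertex, two at the other
endvertex, one at the middle vertex). -/
def P2C (a b c d e : Klein) : Prop :=
  a ≠ 0 ∧ b ≠ 0 ∧ c ≠ 0 ∧ d ≠ 0 ∧ e ≠ 0 ∧ a ≠ b ∧ c ≠ d ∧ a + b + c + d + e = 0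

/-- The colouring set of the disconnected `(2,3)`-pole `M_ev` consisting of an
isolated edge (semiedges `x₁,x₂`) and a single vertex with three dangling
edges (semiedges `a,b,c`). -/
def MevC (x1 x2 a b c : Klein) : Prop :=
  x1 ≠ 0 ∧ x2 ≠ 0 ∧ a ≠ 0 ∧ b ≠ 0 ∧ c ≠ 0 ∧ x1 = x2 ∧ a + b + c = 0

/-- The colouring set of the `(2,2,2)`-pole `V₄` consisting of a vertex and its
three neighbours, each carrying two dangling edges; the `i`-th connector has
semiedge colours `aᵢ, bᵢ`. -/
def V4C (a1 b1 a2 b2 a3 b3 : Klein) : Prop :=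
  a1 ≠ 0 ∧ b1 ≠ 0 ∧ a2 ≠ 0 ∧ b2 ≠ 0 ∧ a3 ≠ 0 ∧ b3 ≠ 0 ∧
    a1 ≠ b1 ∧ a2 ≠ b2 ∧ a3 ≠ b3 ∧ a1 + b1 + a2 + b2 + a3 + b3 = 0

private lemma kadd : ∀ a b : Klein, a + b = 0 → a = b := by decide

private lemma ksum : ∀ a b c : Klein, a + b + c = 0 → c = a + b := by decide

private lemma kcan : ∀ a b t : Klein, a = b → a + (b + t) = t := by decide

private lemma kout : ∀ a b t : Klein, a = b + t → a + b = t := by decide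

private lemma kmid : ∀ a b : Klein, a + b + a = 0 → b = 0 := by decide

/-- **Class 34-D.**  Four negators `Nᵢ(Iᵢ,Oᵢ,rᵢ)` are arranged cyclically with
`Oᵢ` joined to `I_{i+1}`: one semiedge of `Oᵢ` is joined directly
(`I_{i+1} = (o_{i,1}, x_i)`), the other passes through a 3-valent vertex `wᵢ`
which also carries an edge `tᵢ`; the edges `t₁, t₃` and the residual semiedge
`r₁` meet at a central vertex `u`, the edges `t₂, t₄` and `r₃` meet at a second
vertex `u'`, and `r₂` is joined to `r₄`.  The resulting cubic graph `G₄`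
admits no proper 3-edge-colouring, i.e. `G₄` is a snark.  (Properness at a
3-valent vertex with nonzero Klein colours is equivalent to the colour sum
being zero.) -/
theorem class_34D_snark (N1 N2 N3 N4 : Pred5)
    (h1 : IsNegator N1) (h2 : IsNegator N2)
    (h3 : IsNegator N3) (h4 : IsNegator N4) :
    ¬ ∃ o11 o12 o21 o22 o31 o32 o41 o42
        x1 x2 x3 x4 t1 t2 t3 t4 r1 r2 r3 r4 : Klein,
        N1 o41 x4 o11 o12 r1 ∧ N2 o11 x1 o21 o22 r2 ∧
        N3 o21 x2 o31 o32 r3 ∧ N4 o31 x3 o41 o42 r4 ∧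
        t1 ≠ 0 ∧ t2 ≠ 0 ∧ t3 ≠ 0 ∧ t4 ≠ 0 ∧
        o12 + t1 + x1 = 0 ∧ o22 + t2 + x2 = 0 ∧
        o32 + t3 + x3 = 0 ∧ o42 + t4 + x4 = 0 ∧
        t1 + t3 + r1 = 0 ∧ t2 + t4 + r3 = 0 ∧ r2 = r4 := by
  rintro ⟨o11, o12, o21, o22, o31, o32, o41, o42,
    x1, x2, x3, x4, t1, t2, t3, t4, r1, r2, r3, r4,
    n1, n2, n3, n4, ht1, ht2, ht3, ht4, e1, e2, e3, e4, hu, hu', hr24⟩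
  by_cases hc : o11 + o12 = 0
  · -- Case A: flow through O₁ is zero
    have hx1 : x1 = o12 + t1 := ksum _ _ _ e1
    have hI2 : o11 + x1 = t1 := by rw [hx1]; exact kcan _ _ _ (kadd _ _ hc)
    obtain ⟨-, -, -, -, -, d2⟩ := h2 _ _ _ _ _ n2
    rcases d2 with ⟨hz, -, -⟩ | ⟨ho2, -, hr2⟩
    · exact ht1 (hI2 ▸ hz)
    have hx2 : x2 = o22 + t2 := ksum _ _ _ e2
    have hI3 : o21 + x2 = t2 := by rw [hx2]; exact kcan _ _ _ (kadd _ _ ho2)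
    obtain ⟨-, -, -, -, -, d3⟩ := h3 _ _ _ _ _ n3
    rcases d3 with ⟨hz, -, -⟩ | ⟨ho3, -, hr3⟩
    · exact ht2 (hI3 ▸ hz)
    have hr3' : r3 = t2 := by rw [← hr3, hI3]
    exact ht4 (kmid _ _ (by rw [hr3'] at hu'; exact hu'))
  · -- Case B: flow through I₁ is zero
    obtain ⟨-, -, -, -, -, d1⟩ := h1 _ _ _ _ _ n1
    rcases d1 with ⟨hI1, -, hr1⟩ | ⟨hz, -, -⟩
    · have hx4 : x4 = o41 := (kadd _ _ hI1).symm
      have hx4' : x4 = o42 + t4 := ksum _ _ _ e4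
      have hO4 : o41 + o42 = t4 := kout _ _ _ (hx4 ▸ hx4')
      obtain ⟨-, -, -, -, -, d4⟩ := h4 _ _ _ _ _ n4
      rcases d4 with ⟨hI4, -, -⟩ | ⟨hz, -, -⟩
      · have hx3 : x3 = o31 := (kadd _ _ hI4).symm
        have hx3' : x3 = o32 + t3 := ksum _ _ _ e3
        have hO3 : o31 + o32 = t3 := kout _ _ _ (hx3 ▸ hx3')
        obtain ⟨-, -, -, -, -, d3⟩ := h3 _ _ _ _ _ n3
        rcases d3 with ⟨hI3, -, -⟩ | ⟨hz, -, -⟩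
        · have hx2 : x2 = o21 := (kadd _ _ hI3).symm
          have hx2' : x2 = o22 + t2 := ksum _ _ _ e2
          have hO2 : o21 + o22 = t2 := kout _ _ _ (hx2 ▸ hx2')
          obtain ⟨-, -, -, -, -, d2⟩ := h2 _ _ _ _ _ n2
          rcases d2 with ⟨hI2, -, -⟩ | ⟨hz, -, -⟩
          · have hx1 : x1 = o11 := (kadd _ _ hI2).symm
            have hx1' : x1 = o12 + t1 := ksum _ _ _ e1
            have hO1 : o11 + o12 = t1 := kout _ _ _ (hx1 ▸ hx1')
            have hr1' : r1 = t1 := by rw [← hr1, hO1]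
            exact ht3 (kmid _ _ (by rw [hr1'] at hu; exact hu))
          · exact ht2 (hO2 ▸ hz)
        · exact ht3 (hO3 ▸ hz)
      · exact ht4 (hO4 ▸ hz)
    · exact hc hz
end

section
/- Let N1, N2, N3, N4 be negators Ni(Ii,Oi,ri) and let T(B,C) be a proper (2,3)-pole, connected as in the Class 38-A configuration: r1 and r2 form the 2-connector B of T; O1 is joined to I2 (completing the junctions around N1 and N2 through T as in Figure 38-A); O2 is joined to I3; r3 is joined into C; O4 receives the remaining two semiedges of C; and I4, I1 are joined with r4 entering I1. Then the resulting cubic graph G admits no proper 3-edge-colouring, i.e., G is a snark. -/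
/-- **Class 38-A.**  Four negators `Nᵢ(Iᵢ,Oᵢ,rᵢ)` and one proper `(2,3)`-pole
`T(B,C)` are connected as follows: the residual semiedges `r₁, r₂` of `N₁, N₂`
form the 2-connector `B` of `T`; `O₁` is joined to `I₂`, `O₂` to `I₃`; the
residual semiedge `r₃` of `N₃` is one semiedge of `C`, the other two semiedges
of `C` are joined to `O₄`; one semiedge of `I₄` is joined directly to `O₃`,
the other (colour `i₄₂`) passes through a vertex `w` which also receives the
second semiedge of `O₃` and one semiedge `z` of `I₁`; the other semiedge of
`I₁` is the residual semiedge `s` of `N₄`.  The resulting cubic graph admits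
no proper 3-edge-colouring, i.e. it is a snark. -/
theorem class_38A_snark (N1 N2 N3 N4 T : Pred5)
    (h1 : IsNegator N1) (h2 : IsNegator N2)
    (h3 : IsNegator N3) (h4 : IsNegator N4)
    (hT : IsProper23 T) :
    ¬ ∃ s z o11 o12 r1 o21 o22 r2 o31 o32 r3 i42 o41 o42 : Klein,
        N1 s z o11 o12 r1 ∧ N2 o11 o12 o21 o22 r2 ∧
        N3 o21 o22 o31 o32 r3 ∧ N4 o31 i42 o41 o42 s ∧
        T r1 r2 r3 o41 o42 ∧
        z ≠ 0 ∧ o32 + i42 + z = 0 := by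
  have hadd : ∀ x : Klein, x + x = 0 := by decide
  rintro ⟨s, z, o11, o12, r1, o21, o22, r2, o31, o32, r3, i42, o41, o42,
    hN1, hN2, hN3, hN4, hT5, hz, hw⟩
  obtain ⟨-, -, -, -, hr1ne, H1⟩ := h1 _ _ _ _ _ hN1
  obtain ⟨-, -, -, -, hr2ne, H2⟩ := h2 _ _ _ _ _ hN2
  obtain ⟨-, -, -, -, hr3ne, H3⟩ := h3 _ _ _ _ _ hN3
  obtain ⟨-, -, -, -, -, H4⟩ := h4 _ _ _ _ _ hN4
  obtain ⟨-, -, -, -, -, hTeq, hTne⟩ := hT _ _ _ _ _ hT5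
  rcases H1 with ⟨hsz, h1ne, h1eq⟩ | ⟨h1zero, h1ne, h1eq⟩
  · -- o11 + o12 = r1 ≠ 0
    rcases H2 with ⟨h2zero, -, -⟩ | ⟨-, -, h2eq⟩
    · exact h1ne h2zero
    · -- r1 = r2, contradicting r1 + r2 ≠ 0
      have : r1 = r2 := by rw [← h1eq, h2eq]
      exact hTne (by rw [this]; exact hadd r2)
  · -- o11 + o12 = 0, s + z = r1
    rcases H2 with ⟨-, -, h2eq⟩ | ⟨-, h2ne, -⟩
    · -- o21 + o22 = r2 ≠ 0
      rcases H3 with ⟨h3zero, -, -⟩ | ⟨-, -, h3eq⟩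
      · exact hr2ne (by rw [← h2eq, h3zero])
      · -- r3 = r2
        have hr32 : r3 = r2 := by rw [← h3eq, h2eq]
        have ho : o41 + o42 = r1 := by
          rw [hr32] at hTeq
          linear_combination -hTeq
        rcases H4 with ⟨-, -, h4eq⟩ | ⟨h4zero, -, -⟩
        · -- s = o41 + o42 = r1, hence z = 0
          have hsr : s = r1 := by rw [← h4eq, ho]
          exact hz (by linear_combination h1eq - hsr)
        · exact hr1ne (by rw [← ho, h4zero])
    · exact h2ne h1zero
end

section
/- Let M be a 5-pole whose colouring set is contained in the colouring set of the 5-pole C5 consisting of a 5-cycle with one dangling edge at each vertex (in cyclic order). Then either Col(M) = ∅ or Col(M) = Col(C5). In particular, every colourable superpentagon is perfect. -/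
/-- The colouring set of the 5-pole `C₅` consisting of a 5-cycle with one
dangling edge at each vertex, in cyclic order: `g j` is the colour of the
cycle edge from `v j` to `v (j+1)` and `t j` the colour of the dangling edge
at `v j`. -/
def C5col (t : Fin 5 → Klein) : Prop :=
  ∃ g : Fin 5 → Klein,
    (∀ j, g j ≠ 0) ∧ (∀ j, t j ≠ 0) ∧ ∀ j : Fin 5, g (j - 1) + g j + t j = 0


/-!
Colour permutations and Kempe switches both act on the colouring set of any 5-pole. Starting at a
dangling edge, the subgraph spanned by two colours is a path ending at another dangling edge, and
switching its colours changes the boundary colouring in exactly those two places. For a tuple of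
`Col(C₅)` with dangling edges of colours `a, b, c, c, c`, switching the `(a, c)`-chain stays inside
`Col(C₅)` only when the chain ends two steps further on, which rotates the pattern by one position.
Hence a nonempty colouring set inside `Col(C₅)` contains all five rotation classes and, being closed
under colour permutations, all of `Col(C₅)`.
-/

theorem CharTwo.add_add_eq_or {R : Type*} [Semiring R] [CharP R 2] {x y c : R}
    (h : c = x ∨ c = y) : c + (x + y) = y ∨ c + (x + y) = x := by
  rcases h with rfl | rfl
  · exact Or.inl (CharTwo.add_cancel_left _ _)
  · exact Or.inr (by rw [add_comm x, CharTwo.add_cancel_left])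

theorem CharTwo.eq_add_add_of_ne {R : Type*} [Semiring R] [CharP R 2] {x y c d : R}
    (hc : c = x ∨ c = y) (hd : d = x ∨ d = y) (hdc : d ≠ c) : d = c + (x + y) := by
  rcases hc with rfl | rfl <;> rcases hd with rfl | rfl
  · exact absurd rfl hdc
  · rw [CharTwo.add_cancel_left]
  · rw [add_comm c, CharTwo.add_cancel_right]
  · exact absurd rfl hdc

open Equiv MulAction in
/-- The orbit of `p` under `σ = τ ∘ ρ` is a cycle of some length `N`, on which `τ` acts as a
reflection through `p`; its other fixed point is the antipode `σ ^ (N / 2) p`. -/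
theorem Function.Involutive.exists_invariant_fixedPoints_eq_pair {α : Type*} [Finite α]
    {ρ τ : α → α} (hρ : Function.Involutive ρ) (hτ : Function.Involutive τ)
    (hρ_ne : ∀ a, ρ a ≠ a) {p : α} (hp : τ p = p) :
    ∃ q ≠ p, τ q = q ∧ ∃ O : Set α, p ∈ O ∧ q ∈ O ∧ (∀ a ∈ O, ρ a ∈ O) ∧ (∀ a ∈ O, τ a ∈ O) ∧
      ∀ a ∈ O, τ a = a → a = p ∨ a = q := by
  set σ : Perm α := hτ.toPerm * hρ.toPerm
  have hsemiconj : SemiconjBy hτ.toPerm σ σ⁻¹ := by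
    ext a
    simp [σ, hτ _, Perm.inv_def, hρ.toPerm_symm, hτ.toPerm_symm]
  have hτ_pow (k : ℤ) : τ ((σ ^ k) p) = (σ ^ (-k)) p := by
    simpa [hp, inv_zpow'] using congrArg (· p) (hsemiconj.zpow_right k).eq
  have hρ_pow (k : ℤ) : ρ ((σ ^ k) p) = (σ ^ (-(k + 1))) p := by
    rw [← hτ_pow, add_comm, zpow_one_add, Perm.mul_apply]
    exact (hτ _).symm
  set N := period σ p
  have hpow_eq (a b : ℤ) : (σ ^ a) p = (σ ^ b) p ↔ (N : ℤ) ∣ a - b := by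
    rw [← (σ ^ (-b)).injective.eq_iff, ← Perm.mul_apply, ← Perm.mul_apply, ← zpow_add,
      ← zpow_add, neg_add_cancel, zpow_zero, Perm.one_apply, neg_add_eq_sub,
      ← zpow_smul_eq_iff_period_dvd, Perm.smul_def]
  -- an odd period would make `σ ^ m p` a fixed point of `ρ`
  obtain ⟨n, hNn⟩ : Even N := by
    refine Nat.not_odd_iff_even.mp fun ⟨m, hm⟩ => hρ_ne ((σ ^ (m : ℤ)) p) ?_
    rw [hρ_pow, hpow_eq]
    exact ⟨-1, by omega⟩
  have hn : 0 < n := by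
    have : 0 < N := period_pos_of_orderOf_pos (orderOf_pos σ) p
    omega
  refine ⟨(σ ^ (n : ℤ)) p, fun h => ?_, (hτ_pow n).trans ((hpow_eq _ _).mpr ⟨-1, by omega⟩),
    {a | ∃ k : ℤ, (σ ^ k) p = a}, ⟨0, rfl⟩, ⟨n, rfl⟩, ?_, ?_, ?_⟩
  · have := Int.le_of_dvd (by omega) ((hpow_eq n 0).mp (by simpa using h))
    omega
  · rintro _ ⟨k, rfl⟩
    exact ⟨_, (hρ_pow k).symm⟩
  · rintro _ ⟨k, rfl⟩
    exact ⟨_, (hτ_pow k).symm⟩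
  · rintro _ ⟨k, rfl⟩ hfix
    rw [hτ_pow, hpow_eq, hNn] at hfix
    obtain ⟨j, hj⟩ : (n : ℤ) ∣ k := by
      obtain ⟨c, hc⟩ := hfix
      exact ⟨-c, by push_cast at hc; linarith⟩
    obtain ⟨i, rfl | rfl⟩ := Int.even_or_odd' j
    · left
      simpa using (hpow_eq k 0).mpr ⟨i, by rw [hNn]; push_cast; rw [hj]; ring⟩
    · right
      exact (hpow_eq k n).mpr ⟨i, by rw [hNn]; push_cast; rw [hj]; ring⟩

def kempeSwitch {ι : Type*} [DecidableEq ι] (t : ι → Klein) (i j : ι) (z : Klein) : ι → Klein :=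
  fun l => if l = i ∨ l = j then t l + z else t l

structure KempeClosed {ι : Type*} [DecidableEq ι] (S : Set (ι → Klein)) : Prop where
  comp_mem : ∀ t ∈ S, ∀ e : Klein ≃+ Klein, e ∘ t ∈ S
  exists_kempeSwitch_mem : ∀ t ∈ S, ∀ x y : Klein, x ≠ 0 → y ≠ 0 → x ≠ y →
    ∀ i, (t i = x ∨ t i = y) → ∃ j ≠ i, kempeSwitch t i j (x + y) ∈ S

namespace Multipole

variable {M : Multipole} {φ : M.E → Klein}

theorem Proper.comp (hφ : M.Proper φ) {f : Klein → Klein} (hf : Function.Injective f)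
    (hf0 : f 0 = 0) : M.Proper (f ∘ φ) :=
  ⟨fun e => hf0 ▸ hf.ne (hφ.1 e), fun v p q hp hq hpq => hf.ne (hφ.2 v p q hp hq hpq)⟩

theorem Proper.existsUnique_end (hM : M.IsCubic) (hφ : M.Proper φ) (v : M.V) {c : Klein}
    (hc : c ≠ 0) : ∃! p : M.E × Bool, M.endAt p.1 p.2 = some v ∧ φ p.1 = c := by
  have hinj : Set.InjOn (fun p : M.E × Bool => φ p.1)
      (Finset.univ.filter fun p : M.E × Bool => M.endAt p.1 p.2 = some v) :=
    fun p hp q hq hpq =>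
      by_contra fun hne => hφ.2 v p q (by simpa using hp) (by simpa using hq) hne hpq
  obtain ⟨p, hp, hpc⟩ := Finset.surjOn_of_injOn_of_card_le _
    (t := Finset.univ.filter (· ≠ 0)) (fun p _ => by simpa using hφ.1 p.1) hinj
    ((by decide : (Finset.univ.filter fun c : Klein => c ≠ 0).card = 3).trans (hM v).symm).le
    (by simpa using hc)
  refine ⟨p, ⟨by simpa using hp, hpc⟩, fun q hq => hinj (by simpa using hq.1) hp ?_⟩
  exact hq.2.trans hpc.symm

open scoped Classical in
theorem Proper.kempe_switch (hφ : M.Proper φ) {x y : Klein} (hx : x ≠ 0) (hy : y ≠ 0)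
    {K : Set M.E} (hK : ∀ e ∈ K, φ e = x ∨ φ e = y)
    (hK_closed : ∀ (v : M.V) (p q : M.E × Bool), M.endAt p.1 p.2 = some v →
      M.endAt q.1 q.2 = some v → p.1 ∈ K → (φ q.1 = x ∨ φ q.1 = y) → q.1 ∈ K) :
    M.Proper fun e => if e ∈ K then φ e + (x + y) else φ e := by
  refine ⟨fun e => ?_, fun v p q hp hq hpq => ?_⟩
  · dsimp only
    split_ifs with he
    · rcases CharTwo.add_add_eq_or (hK e he) with h | h <;> rw [h] <;> assumption
    · exact hφ.1 e
  · have hne := hφ.2 v p q hp hq hpq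
    by_cases hpK : p.1 ∈ K <;> by_cases hqK : q.1 ∈ K <;>
      simp only [hpK, hqK, if_true, if_false]
    · exact fun h => hne (add_right_cancel h)
    · intro h
      exact hqK (hK_closed v p q hp hq hpK (Or.symm (h ▸ CharTwo.add_add_eq_or (hK _ hpK))))
    · intro h
      exact hpK (hK_closed v q p hq hp hqK (Or.symm (h ▸ CharTwo.add_add_eq_or (hK _ hqK))))
    · exact hne

theorem Proper.exists_kempe_partner (hM : M.IsCubic) (hφ : M.Proper φ) {x y : Klein}
    (hx : x ≠ 0) (hy : y ≠ 0) (hxy : x ≠ y) :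
    ∃ τ : {p : M.E × Bool // φ p.1 = x ∨ φ p.1 = y} → {p : M.E × Bool // φ p.1 = x ∨ φ p.1 = y},
      Function.Involutive τ ∧ (∀ a, τ a = a ↔ M.endAt a.1.1 a.1.2 = none) ∧
      ∀ a b v, M.endAt a.1.1 a.1.2 = some v → M.endAt b.1.1 b.1.2 = some v → a ≠ b → τ a = b := by
  classical
  let A := {p : M.E × Bool // φ p.1 = x ∨ φ p.1 = y}
  have hswap_ne (a : A) : φ a.1.1 + (x + y) ≠ 0 ∧ φ a.1.1 + (x + y) ≠ φ a.1.1 := by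
    refine ⟨fun h => ?_, fun h => hxy (CharTwo.add_eq_zero.mp (by simpa using h))⟩
    rcases CharTwo.add_add_eq_or a.2 with h' | h' <;> rw [h'] at h <;> contradiction
  have hτ_ex (a : A) : ∃ b : A, (M.endAt a.1.1 a.1.2 = none → b = a) ∧
      ∀ v, M.endAt a.1.1 a.1.2 = some v →
        M.endAt b.1.1 b.1.2 = some v ∧ φ b.1.1 = φ a.1.1 + (x + y) := by
    cases hv : M.endAt a.1.1 a.1.2 with
    | none => exact ⟨a, fun _ => rfl, fun _ h => nomatch h⟩
    | some v =>
      obtain ⟨b, ⟨hbv, hbc⟩, -⟩ := hφ.existsUnique_end hM v (hswap_ne a).1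
      exact ⟨⟨b, hbc ▸ (CharTwo.add_add_eq_or a.2).symm⟩, nofun,
        fun w hw => ⟨Option.some_inj.mp hw ▸ hbv, hbc⟩⟩
  choose τ hτ_free hτ_vertex using hτ_ex
  have hτ_pair (a b : A) (v : M.V) (ha : M.endAt a.1.1 a.1.2 = some v)
      (hb : M.endAt b.1.1 b.1.2 = some v) (hab : a ≠ b) : τ a = b :=
    Subtype.ext <| (hφ.existsUnique_end hM v (hswap_ne a).1).unique (hτ_vertex a v ha)
      ⟨hb, CharTwo.eq_add_add_of_ne a.2 b.2
        (hφ.2 v a.1 b.1 ha hb fun h => hab (Subtype.ext h)).symm⟩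
  have hτ_fixed (a : A) : τ a = a ↔ M.endAt a.1.1 a.1.2 = none := by
    refine ⟨fun ha => ?_, hτ_free a⟩
    cases hv : M.endAt a.1.1 a.1.2 with
    | none => rfl
    | some v => exact absurd (ha ▸ (hτ_vertex a v hv).2).symm (hswap_ne a).2
  refine ⟨τ, fun a => ?_, hτ_fixed, hτ_pair⟩
  cases hv : M.endAt a.1.1 a.1.2 with
  | none => rw [hτ_free a hv, hτ_free a hv]
  | some v =>
    refine hτ_pair _ _ v (hτ_vertex a v hv).1 hv fun h => ?_
    exact absurd ((hτ_fixed a).mp h) (by simp [hv])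

theorem Proper.exists_kempe_switch (hM : M.IsCubic) (hφ : M.Proper φ) {x y : Klein}
    (hx : x ≠ 0) (hy : y ≠ 0) (hxy : x ≠ y) {p : M.E × Bool} (hp : M.endAt p.1 p.2 = none)
    (hpc : φ p.1 = x ∨ φ p.1 = y) :
    ∃ q : M.E × Bool, q ≠ p ∧ M.endAt q.1 q.2 = none ∧ ∃ φ' : M.E → Klein, M.Proper φ' ∧
      ∀ r : M.E × Bool, M.endAt r.1 r.2 = none →
        φ' r.1 = if r = p ∨ r = q then φ r.1 + (x + y) else φ r.1 := by
  classical
  let A := {a : M.E × Bool // φ a.1 = x ∨ φ a.1 = y}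
  let ρ : A → A := fun a => ⟨(a.1.1, !a.1.2), a.2⟩
  have hρ : Function.Involutive ρ := fun a => by simp [ρ]
  obtain ⟨τ, hτ, hτ_fixed, hτ_pair⟩ := hφ.exists_kempe_partner hM hx hy hxy
  obtain ⟨q, hqp, hq, O, hpO, hqO, hρO, hτO, hfixO⟩ :=
    hρ.exists_invariant_fixedPoints_eq_pair hτ (fun a h => by simpa [ρ] using congrArg (·.1.2) h)
      (p := ⟨p, hpc⟩) ((hτ_fixed _).mpr hp)
  set K := (fun a : A => a.1.1) '' O
  have hmemO (a : A) (ha : a.1.1 ∈ K) : a ∈ O := by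
    obtain ⟨b, hb, hba⟩ := ha
    by_cases h : a.1.2 = b.1.2
    · convert hb
      exact Subtype.ext (Prod.ext hba.symm h)
    · convert hρO b hb
      exact Subtype.ext (Prod.ext hba.symm (Bool.eq_not.mpr h))
  have hK : ∀ e ∈ K, φ e = x ∨ φ e = y := by
    rintro e ⟨a, -, rfl⟩
    exact a.2
  refine ⟨q.1, fun h => hqp (Subtype.ext h), (hτ_fixed q).mp hq, _,
    hφ.kempe_switch hx hy hK ?_, ?_⟩
  · intro v p₁ p₂ h₁ h₂ hp₁K hp₂c
    by_cases hp : p₁ = p₂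
    · exact hp ▸ hp₁K
    have hτp₁ : τ ⟨p₁, hK _ hp₁K⟩ = ⟨p₂, hp₂c⟩ :=
      hτ_pair _ _ v h₁ h₂ fun h => hp (congrArg Subtype.val h)
    exact ⟨_, hτp₁ ▸ hτO _ (hmemO _ hp₁K), rfl⟩
  · intro r hr
    by_cases hrpq : r = p ∨ r = q.1
    · have hrK : r.1 ∈ K := by
        rcases hrpq with rfl | rfl
        exacts [⟨_, hpO, rfl⟩, ⟨_, hqO, rfl⟩]
      simp [hrK, hrpq]
    · have hrK : r.1 ∉ K := fun hrK => hrpq <|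
        (hfixO _ (hmemO ⟨r, hK _ hrK⟩ hrK) ((hτ_fixed _).mpr hr)).imp (congrArg Subtype.val)
          (congrArg Subtype.val)
      simp [hrK, hrpq]

theorem kempeClosed_boundaryColourings (hM : M.IsCubic) {ι : Type*} [DecidableEq ι]
    {s : ι → M.E × Bool} (hs1 : ∀ j, M.endAt (s j).1 (s j).2 = none)
    (hs2 : Function.Injective s) (hs3 : ∀ p : M.E × Bool, M.endAt p.1 p.2 = none → ∃ j, s j = p) :
    KempeClosed {t : ι → Klein | ∃ φ : M.E → Klein, M.Proper φ ∧ ∀ j, φ (s j).1 = t j} := by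
  refine ⟨?_, ?_⟩
  · rintro t ⟨φ, hφ, hφs⟩ e
    exact ⟨e ∘ φ, hφ.comp e.injective (map_zero e), fun j => by simp [hφs]⟩
  · rintro t ⟨φ, hφ, hφs⟩ x y hx hy hxy i hi
    obtain ⟨q, hqi, hq, φ', hφ', hφ's⟩ :=
      hφ.exists_kempe_switch hM hx hy hxy (hs1 i) (hφs i ▸ hi)
    obtain ⟨j, rfl⟩ := hs3 q hq
    refine ⟨j, fun h => hqi (congrArg s h), φ', hφ', fun l => ?_⟩
    simp [hφ's _ (hs1 l), hs2.eq_iff, kempeSwitch, hφs]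

end Multipole

theorem Klein.exists_addEquiv {a b : Klein} (ha : a ≠ 0) (hb : b ≠ 0) (hab : a ≠ b) :
    ∃ e : Klein ≃+ Klein, e (1, 0) = a ∧ e (0, 1) = b := by
  let f : Klein →+ Klein :=
    { toFun := fun z => z.1 • a + z.2 • b
      map_zero' := by simp
      map_add' := fun z w => by simp only [Prod.fst_add, Prod.snd_add, add_smul]; abel }
  have hf : Function.Injective f := (injective_iff_map_eq_zero f).mpr fun z => by
    revert z ha hb hab
    revert a b
    decide
  exact ⟨AddEquiv.ofBijective f (Finite.injective_iff_bijective.mp hf), by simp [f], by simp [f]⟩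

/-- The boundary colouring of `C₅` in which the cycle edge between `v k` and `v (k + 1)` is the
only edge of its colour. -/
def pentagonTuple (k : Fin 5) (a b : Klein) : Fin 5 → Klein :=
  fun j => if j = k then a else if j = k + 1 then b else a + b

theorem AddEquiv.comp_pentagonTuple (e : Klein ≃+ Klein) (k : Fin 5) (a b : Klein) :
    e ∘ pentagonTuple k a b = pentagonTuple k (e a) (e b) := by
  funext j
  simp only [Function.comp_apply, pentagonTuple]
  split_ifs <;> simp [map_add]

theorem C5col.exists_eq_pentagonTuple {t : Fin 5 → Klein} (ht : C5col t) :
    ∃ k, t = pentagonTuple k (t k) (t (k + 1)) := by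
  obtain ⟨g, hg, ht0, hsum⟩ := ht
  obtain rfl : t = fun j => g (j - 1) + g j :=
    funext fun j => (CharTwo.add_eq_zero.mp (hsum j)).symm
  clear hsum
  beta_reduce at *
  revert g
  decide +kernel

theorem kempeSwitch_pentagonTuple_eq_of_c5col {k j : Fin 5}
    (h : C5col (kempeSwitch (pentagonTuple k (1, 0) (0, 1)) k j (0, 1))) :
    kempeSwitch (pentagonTuple k (1, 0) (0, 1)) k j (0, 1) =
      pentagonTuple (k + 1) (0, 1) (1, 0) := by
  obtain ⟨k', hk'⟩ := h.exists_eq_pentagonTuple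
  obtain ⟨-, -, h0, -⟩ := h
  revert h0 hk' k'
  revert k j
  decide +kernel

theorem KempeClosed.pentagonTuple_succ_mem {S : Set (Fin 5 → Klein)} (hS : KempeClosed S)
    (hsub : S ⊆ {t | C5col t}) {k : Fin 5} (hk : pentagonTuple k (1, 0) (0, 1) ∈ S) :
    pentagonTuple (k + 1) (1, 0) (0, 1) ∈ S := by
  obtain ⟨j, -, hj⟩ := hS.exists_kempeSwitch_mem _ hk (1, 0) (1, 1) (by decide) (by decide)
    (by decide) k (by simp [pentagonTuple])
  rw [show ((1, 0) + (1, 1) : Klein) = (0, 1) by decide,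
    kempeSwitch_pentagonTuple_eq_of_c5col (hsub hj)] at hj
  have := hS.comp_mem _ hj AddEquiv.prodComm
  rwa [AddEquiv.comp_pentagonTuple] at this

open Fin.NatCast in
theorem KempeClosed.c5col_subset {S : Set (Fin 5 → Klein)} (hS : KempeClosed S)
    (hsub : S ⊆ {t | C5col t}) (hne : S.Nonempty) : {t | C5col t} ⊆ S := by
  have hform (t : Fin 5 → Klein) (ht : C5col t) :
      ∃ k, ∃ e : Klein ≃+ Klein, t = e ∘ pentagonTuple k (1, 0) (0, 1) := by
    obtain ⟨k, hk⟩ := ht.exists_eq_pentagonTuple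
    obtain ⟨-, -, ht0, -⟩ := ht
    have hab : t k ≠ t (k + 1) := fun h => ht0 (k + 2) <| by
      rw [hk]; simpa [pentagonTuple, h] using CharTwo.add_self_eq_zero (t (k + 1))
    obtain ⟨e, he₁, he₂⟩ := Klein.exists_addEquiv (ht0 k) (ht0 (k + 1)) hab
    exact ⟨k, e, by rw [AddEquiv.comp_pentagonTuple, he₁, he₂, ← hk]⟩
  obtain ⟨t₀, ht₀⟩ := hne
  obtain ⟨k₀, e₀, rfl⟩ := hform t₀ (hsub ht₀)
  have hall (n : ℕ) : pentagonTuple (k₀ + (n : Fin 5)) (1, 0) (0, 1) ∈ S := by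
    induction n with
    | zero => simpa [← Function.comp_assoc] using hS.comp_mem _ ht₀ e₀.symm
    | succ n ih => simpa [add_assoc] using hS.pentagonTuple_succ_mem hsub ih
  intro t ht
  obtain ⟨k, e, rfl⟩ := hform t ht
  simpa using hS.comp_mem _ (hall (k - k₀).val) e

/-- **Superpentagon dichotomy** (Nedela–Škoviera).  Let `M` be a 5-pole (a
cubic multipole whose five semiedge ends are enumerated by `s`) whose
colouring set is contained in `Col(C₅)`.  Then either `Col(M) = ∅` or
`Col(M) = Col(C₅)`; in particular, every colourable superpentagon is
perfect. -/
theorem superpentagon_dichotomy (M : Multipole) (hM : M.IsCubic)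
    (s : Fin 5 → M.E × Bool)
    (hs1 : ∀ j, M.endAt (s j).1 (s j).2 = none)
    (hs2 : Function.Injective s)
    (hs3 : ∀ p : M.E × Bool, M.endAt p.1 p.2 = none → ∃ j, s j = p)
    (hsub : ∀ t : Fin 5 → Klein,
      (∃ φ : M.E → Klein, M.Proper φ ∧ ∀ j, φ (s j).1 = t j) → C5col t) :
    (∀ t : Fin 5 → Klein, ¬ ∃ φ : M.E → Klein, M.Proper φ ∧ ∀ j, φ (s j).1 = t j) ∨
    (∀ t : Fin 5 → Klein,
      (∃ φ : M.E → Klein, M.Proper φ ∧ ∀ j, φ (s j).1 = t j) ↔ C5col t) := by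
  set S := {t : Fin 5 → Klein | ∃ φ : M.E → Klein, M.Proper φ ∧ ∀ j, φ (s j).1 = t j}
  rcases S.eq_empty_or_nonempty with hS | hS
  · exact Or.inl fun t ht => hS.subset ht
  · refine Or.inr fun t => ⟨hsub t, fun ht => ?_⟩
    exact (Multipole.kempeClosed_boundaryColourings hM hs1 hs2 hs3).c5col_subset hsub hS ht
end
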